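/- For every complex number z with |z| ≥ 1 and every real x ≥ 1, one has |z^x - 1| ≤ x·|z - 1|·|z|^x. -/

import Mathlib

/-!
Off the negative real axis, `w ↦ w ^ x` is holomorphic on the segment `[1, z]` with derivative
`x w ^ (x - 1)`, of norm at most `x ‖z‖ ^ (x - 1)` there since `‖w‖ ≤ ‖z‖` and `x ≥ 1`; the mean
value inequality gives the bound. On the negative real axis `‖z - 1‖ = ‖z‖ + 1 ≥ 2`, so the
triangle inequality `‖z ^ x - 1‖ ≤ 2 ‖z‖ ^ x` already suffices.
-/

open Complex
open scoped ComplexOrder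

lemma norm_le_of_mem_segment_one {z w : ℂ} (hz : 1 ≤ ‖z‖) (hw : w ∈ segment ℝ 1 z) :
    ‖w‖ ≤ ‖z‖ := by
  simpa using (convex_closedBall (0 : ℂ) ‖z‖).segment_subset (by simpa using hz) (by simp) hw

lemma norm_cpow_sub_one_le_of_mem_slitPlane {z : ℂ} (hz : z ∈ slitPlane) (hz1 : 1 ≤ ‖z‖)
    {x : ℝ} (hx : 1 ≤ x) : ‖z ^ (x : ℂ) - 1‖ ≤ x * ‖z‖ ^ (x - 1) * ‖z - 1‖ := by
  have hseg : segment ℝ 1 z ⊆ slitPlane := starConvex_one_slitPlane.segment_subset hz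
  have hderiv : ∀ w ∈ segment ℝ 1 z,
      HasDerivWithinAt (· ^ (x : ℂ)) (x * w ^ ((x : ℂ) - 1)) (segment ℝ 1 z) w := fun w hw ↦
    (hasStrictDerivAt_cpow_const (hseg hw)).hasDerivAt.hasDerivWithinAt
  have hbound : ∀ w ∈ segment ℝ 1 z, ‖(x : ℂ) * w ^ ((x : ℂ) - 1)‖ ≤ x * ‖z‖ ^ (x - 1) := by
    intro w hw
    rw [norm_mul, norm_real, Real.norm_of_nonneg (by linarith), ← ofReal_one, ← ofReal_sub,
      norm_cpow_real]
    gcongr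
    exact norm_le_of_mem_segment_one hz1 hw
  simpa using (convex_segment 1 z).norm_image_sub_le_of_norm_hasDerivWithin_le hderiv hbound
    (left_mem_segment ℝ 1 z) (right_mem_segment ℝ 1 z)

lemma norm_sub_one_of_nonpos {z : ℂ} (hz : z ≤ 0) : ‖z - 1‖ = ‖z‖ + 1 := by
  obtain ⟨hre, him⟩ := nonpos_iff.1 hz
  rw [← re_add_im z, him, ofReal_zero, zero_mul, add_zero, ← ofReal_one, ← ofReal_sub, norm_real,
    norm_real, Real.norm_of_nonpos hre, Real.norm_of_nonpos (by linarith)]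
  ring

lemma norm_cpow_sub_one_le_of_two_le {z : ℂ} (hz : 1 ≤ ‖z‖) {x : ℝ} (hx : 0 ≤ x)
    (h : 2 ≤ x * ‖z - 1‖) : ‖z ^ (x : ℂ) - 1‖ ≤ x * ‖z - 1‖ * ‖z‖ ^ x := by
  have hzx : 1 ≤ ‖z‖ ^ x := Real.one_le_rpow hz hx
  calc ‖z ^ (x : ℂ) - 1‖ ≤ ‖z ^ (x : ℂ)‖ + ‖(1 : ℂ)‖ := norm_sub_le _ _
    _ = ‖z‖ ^ x + 1 := by rw [norm_cpow_real, norm_one]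
    _ ≤ 2 * ‖z‖ ^ x := by linarith
    _ ≤ x * ‖z - 1‖ * ‖z‖ ^ x := by gcongr

theorem cpow_sub_one_bound (z : ℂ) (hz : 1 ≤ ‖z‖) (x : ℝ) (hx : 1 ≤ x) :
    ‖z ^ (x : ℂ) - 1‖ ≤ x * ‖z - 1‖ * ‖z‖ ^ x := by
  by_cases hslit : z ∈ slitPlane
  · calc ‖z ^ (x : ℂ) - 1‖ ≤ x * ‖z‖ ^ (x - 1) * ‖z - 1‖ :=
          norm_cpow_sub_one_le_of_mem_slitPlane hslit hz hx
      _ ≤ x * ‖z‖ ^ x * ‖z - 1‖ := by gcongr; linarith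
      _ = x * ‖z - 1‖ * ‖z‖ ^ x := by ring
  · have hnonpos : z ≤ 0 := by simpa [mem_slitPlane_iff_not_le_zero] using hslit
    refine norm_cpow_sub_one_le_of_two_le hz (by linarith) ?_
    rw [norm_sub_one_of_nonpos hnonpos]
    nlinarith
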